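/- arXiv:1104.5131 — 6 statements merged into one kernel-verified Lean document; each statement's English description precedes it below -/
import Mathlib

section
/- Let A, B, σ₁, σ₂ be positive real numbers and ρ ∈ [-1,1], and suppose A²σ₂² ≤ B²σ₁². Set λ₂ᵐⁱⁿ = 1/2 + Aσ₂ρ/(2Bσ₁). Then λ₂ᵐⁱⁿ ∈ [0,1], for every λ ∈ ℝ one has Σ₂(λ₂ᵐⁱⁿ) ≤ Σ₂(λ), and for every λ ∈ [0,1] one has Σ₂(λ₂ᵐⁱⁿ) ≤ Σ₁(λ). In other words, under the condition A²σ₂² ≤ B²σ₁² the minimum asymptotic variance over both families is attained by the second family at λ₂ᵐⁱⁿ. -/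
/-- Asymptotic variance of the ratio estimator in the regime `N' = λ N`. -/
noncomputable def Sigma1 (A B σ₁ σ₂ ρ lam : ℝ) : ℝ :=
  (1 / B ^ 2) * ((2 * lam ^ 2 - 2 * lam + 1) * (A ^ 2 / B ^ 2) * σ₂ ^ 2 + σ₁ ^ 2
    - 2 * lam * (A / B) * σ₁ * σ₂ * ρ)

/-- Asymptotic variance of the ratio estimator in the regime `N = λ N'`. -/
noncomputable def Sigma2 (A B σ₁ σ₂ ρ lam : ℝ) : ℝ :=
  (1 / B ^ 2) * ((2 * lam ^ 2 - 2 * lam + 1) * σ₁ ^ 2 + (A ^ 2 / B ^ 2) * σ₂ ^ 2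
    - 2 * lam * (A / B) * σ₁ * σ₂ * ρ)

set_option maxHeartbeats 1000000 in
theorem stmt1 (A B σ₁ σ₂ ρ : ℝ) (hA : 0 < A) (hB : 0 < B) (hσ₁ : 0 < σ₁) (hσ₂ : 0 < σ₂)
    (hρ : ρ ∈ Set.Icc (-1 : ℝ) 1) (hcond : A ^ 2 * σ₂ ^ 2 ≤ B ^ 2 * σ₁ ^ 2) :
    (1 / 2 + A * σ₂ * ρ / (2 * B * σ₁)) ∈ Set.Icc (0 : ℝ) 1 ∧
    (∀ lam : ℝ,
      Sigma2 A B σ₁ σ₂ ρ (1 / 2 + A * σ₂ * ρ / (2 * B * σ₁)) ≤ Sigma2 A B σ₁ σ₂ ρ lam) ∧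
    (∀ lam ∈ Set.Icc (0 : ℝ) 1,
      Sigma2 A B σ₁ σ₂ ρ (1 / 2 + A * σ₂ * ρ / (2 * B * σ₁)) ≤ Sigma1 A B σ₁ σ₂ ρ lam) := by
  obtain ⟨hρ1, hρ2⟩ := hρ
  have hAσ : 0 < A * σ₂ := mul_pos hA hσ₂
  have hBσ : 0 < B * σ₁ := mul_pos hB hσ₁
  have hAB : A * σ₂ ≤ B * σ₁ := by nlinarith
  have hpos : (0:ℝ) < 2 * B * σ₁ := by positivity
  have hB2 : (B:ℝ) ≠ 0 := ne_of_gt hB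
  have hσ1 : (σ₁:ℝ) ≠ 0 := ne_of_gt hσ₁
  refine ⟨⟨?_, ?_⟩, ?_, ?_⟩
  · have h : -(B * σ₁) ≤ A * σ₂ * ρ := by nlinarith
    have : -(1/2 : ℝ) ≤ A * σ₂ * ρ / (2 * B * σ₁) := by
      rw [le_div_iff₀ hpos]; nlinarith
    linarith
  · have h : A * σ₂ * ρ ≤ B * σ₁ := by nlinarith
    have : A * σ₂ * ρ / (2 * B * σ₁) ≤ 1/2 := by
      rw [div_le_iff₀ hpos]; nlinarith
    linarith
  · intro lam
    have key : Sigma2 A B σ₁ σ₂ ρ lam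
        - Sigma2 A B σ₁ σ₂ ρ (1 / 2 + A * σ₂ * ρ / (2 * B * σ₁))
        = (2 * σ₁ ^ 2 / B ^ 2) * (lam - (1 / 2 + A * σ₂ * ρ / (2 * B * σ₁))) ^ 2 := by
      unfold Sigma2
      field_simp
      ring
    nlinarith [mul_nonneg (by positivity : (0:ℝ) ≤ 2 * σ₁ ^ 2 / B ^ 2)
      (sq_nonneg (lam - (1 / 2 + A * σ₂ * ρ / (2 * B * σ₁))))]
  · rintro lam ⟨hl0, hl1⟩
    have key : Sigma1 A B σ₁ σ₂ ρ lam
        - Sigma2 A B σ₁ σ₂ ρ (1 / 2 + A * σ₂ * ρ / (2 * B * σ₁))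
        = (1 / (2 * B ^ 4)) * ((A * σ₂ * ρ + B * σ₁ * (1 - 2 * lam)) ^ 2
            + 4 * lam * (1 - lam) * (B ^ 2 * σ₁ ^ 2 - A ^ 2 * σ₂ ^ 2)) := by
      unfold Sigma1 Sigma2
      field_simp
      ring
    have h1 : 0 ≤ (A * σ₂ * ρ + B * σ₁ * (1 - 2 * lam)) ^ 2 := sq_nonneg _
    have h2 : 0 ≤ 4 * lam * (1 - lam) * (B ^ 2 * σ₁ ^ 2 - A ^ 2 * σ₂ ^ 2) := by
      apply mul_nonneg
      · nlinarith
      · linarith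
    nlinarith [mul_nonneg (by positivity : (0:ℝ) ≤ 1 / (2 * B ^ 4)) (add_nonneg h1 h2)]
end

section
/- Let A, B, σ₁, σ₂ be positive real numbers and ρ ∈ [-1,1], let λ₁ᵐⁱⁿ = 1/2 + Bσ₁ρ/(2Aσ₂), and suppose A²σ₂² ≥ B²σ₁². Then B²·Σ₁(λ₁ᵐⁱⁿ) - σ₁² = (A²σ₂²/B²)/2 - σ₁²ρ²/2 - (A/B)σ₁σ₂ρ, and this quantity is strictly negative if and only if ρ > (√2 - 1)·Aσ₂/(Bσ₁). In particular, when ρ exceeds this threshold, the optimized double Monte Carlo ratio estimator has strictly smaller asymptotic variance than the single Monte Carlo estimator with known denominator. -/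
theorem stmt3 (A B σ₁ σ₂ ρ : ℝ) (hA : 0 < A) (hB : 0 < B) (hσ₁ : 0 < σ₁) (hσ₂ : 0 < σ₂)
    (hρ : ρ ∈ Set.Icc (-1 : ℝ) 1) (hcond : B ^ 2 * σ₁ ^ 2 ≤ A ^ 2 * σ₂ ^ 2) :
    B ^ 2 * Sigma1 A B σ₁ σ₂ ρ (1 / 2 + B * σ₁ * ρ / (2 * A * σ₂)) - σ₁ ^ 2
      = (A ^ 2 * σ₂ ^ 2 / B ^ 2) / 2 - σ₁ ^ 2 * ρ ^ 2 / 2 - (A / B) * σ₁ * σ₂ * ρ ∧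
    (B ^ 2 * Sigma1 A B σ₁ σ₂ ρ (1 / 2 + B * σ₁ * ρ / (2 * A * σ₂)) - σ₁ ^ 2 < 0 ↔
      (Real.sqrt 2 - 1) * A * σ₂ / (B * σ₁) < ρ) := by
  obtain ⟨hρ1, hρ2⟩ := hρ
  have hs : Real.sqrt 2 ^ 2 = 2 := Real.sq_sqrt (by norm_num)
  have hs0 : (0:ℝ) ≤ Real.sqrt 2 := Real.sqrt_nonneg 2
  have hs1 : 1 < Real.sqrt 2 := by nlinarith
  have hab : B * σ₁ ≤ A * σ₂ := by
    have h1 : (B * σ₁) ^ 2 ≤ (A * σ₂) ^ 2 := by nlinarith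
    exact le_of_pow_le_pow_left₀ two_ne_zero (by positivity) h1
  have heq : B ^ 2 * Sigma1 A B σ₁ σ₂ ρ (1 / 2 + B * σ₁ * ρ / (2 * A * σ₂)) - σ₁ ^ 2
      = (A ^ 2 * σ₂ ^ 2 / B ^ 2) / 2 - σ₁ ^ 2 * ρ ^ 2 / 2 - (A / B) * σ₁ * σ₂ * ρ := by
    unfold Sigma1
    field_simp
    ring
  refine ⟨heq, ?_⟩
  rw [heq]
  have hBσ : (0:ℝ) < B * σ₁ := by positivity
  rw [div_lt_iff₀ hBσ]
  set s := Real.sqrt 2 with hsdef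
  have ha0 : 0 < A * σ₂ := by positivity
  have hB2 : (0:ℝ) < 2 * B ^ 2 := by positivity
  have hid : 2 * B ^ 2 * ((A ^ 2 * σ₂ ^ 2 / B ^ 2) / 2 - σ₁ ^ 2 * ρ ^ 2 / 2
      - (A / B) * σ₁ * σ₂ * ρ)
      = (A * σ₂) ^ 2 - (B * σ₁ * ρ) ^ 2 - 2 * (A * σ₂) * (B * σ₁ * ρ) := by
    field_simp
  have hab0 : 0 ≤ A * σ₂ + B * σ₁ * ρ := by nlinarith
  constructor
  · intro h
    have h2 : 2 * (A * σ₂) ^ 2 < (A * σ₂ + B * σ₁ * ρ) ^ 2 := by nlinarith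
    have h3 : s * (A * σ₂) < A * σ₂ + B * σ₁ * ρ := by
      refine lt_of_pow_lt_pow_left₀ 2 hab0 ?_
      calc (s * (A * σ₂)) ^ 2 = 2 * (A * σ₂) ^ 2 := by rw [mul_pow, hs]
        _ < _ := h2
    linarith
  · intro h
    have h3 : s * (A * σ₂) < A * σ₂ + B * σ₁ * ρ := by linarith
    have hsa : 0 < s * (A * σ₂) := by positivity
    have h4 := pow_lt_pow_left₀ h3 (le_of_lt hsa) two_ne_zero
    have hsq : (s * (A * σ₂)) ^ 2 = 2 * (A * σ₂) ^ 2 := by rw [mul_pow, hs]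
    have h2 : 2 * (A * σ₂) ^ 2 < (A * σ₂ + B * σ₁ * ρ) ^ 2 := by rw [← hsq]; exact h4
    by_contra hc
    push_neg at hc
    have h5 : 0 ≤ 2 * B ^ 2 * ((A ^ 2 * σ₂ ^ 2 / B ^ 2) / 2 - σ₁ ^ 2 * ρ ^ 2 / 2
        - (A / B) * σ₁ * σ₂ * ρ) := mul_nonneg (le_of_lt hB2) hc
    rw [hid] at h5
    linarith [h5, h2]
end

section
/- Let ι be a finite type, s a finite subset of ι, and k ∈ s. For a permutation q of ι, say that q is an involution supported in s if q ∘ q = id and q(i) = i for every i ∉ s. Then the map (l, p) ↦ (swap k l) ∘ p is a bijection from the set of pairs (l, p), where l ∈ s and p is an involution supported in s satisfying p(k) = k and p(l) = l, onto the set of involutions supported in s. (Here swap k l denotes the transposition exchanging k and l, with swap k k = id; the case l = k recovers exactly the involutions supported in s fixing k.) -/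
theorem stmt7 {ι : Type*} [Fintype ι] [DecidableEq ι] (s : Finset ι) (k : ι) (hk : k ∈ s) :
    Set.BijOn (fun lp : ι × Equiv.Perm ι => Equiv.swap k lp.1 * lp.2)
      {lp : ι × Equiv.Perm ι | lp.1 ∈ s ∧ lp.2 * lp.2 = 1 ∧ (∀ i ∉ s, lp.2 i = i) ∧
        lp.2 k = k ∧ lp.2 lp.1 = lp.1}
      {q : Equiv.Perm ι | q * q = 1 ∧ ∀ i ∉ s, q i = i} := by
  refine ⟨?_, ?_, ?_⟩
  · rintro ⟨l, p⟩ ⟨hl, hpp, hps, hpk, hpl⟩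
    have h1 : p⁻¹ = p := inv_eq_of_mul_eq_one_left hpp
    have h2 : p * Equiv.swap k l * p⁻¹ = Equiv.swap (p k) (p l) :=
      (Equiv.swap_apply_apply p k l).symm
    rw [h1, hpk, hpl] at h2
    constructor
    · show Equiv.swap k l * p * (Equiv.swap k l * p) = 1
      calc Equiv.swap k l * p * (Equiv.swap k l * p)
          = Equiv.swap k l * (p * Equiv.swap k l * p) := by group
        _ = Equiv.swap k l * Equiv.swap k l := by rw [h2]
        _ = 1 := Equiv.swap_mul_self k l
    · intro i hi
      have hik : i ≠ k := fun h => hi (h ▸ hk)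
      have hil : i ≠ l := fun h => hi (h ▸ hl)
      show Equiv.swap k l (p i) = i
      rw [hps i hi, Equiv.swap_apply_of_ne_of_ne hik hil]
  · rintro ⟨l₁, p₁⟩ ⟨hl₁, hpp₁, hps₁, hpk₁, hpl₁⟩ ⟨l₂, p₂⟩ ⟨hl₂, hpp₂, hps₂, hpk₂, hpl₂⟩ h
    simp only [Prod.mk.injEq] at h ⊢
    have hL : l₁ = l₂ := by
      have := congrArg (fun q : Equiv.Perm ι => q k) h
      simpa [Equiv.Perm.mul_apply, hpk₁, hpk₂] using this
    refine ⟨hL, ?_⟩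
    subst hL
    exact mul_left_cancel h
  · rintro q ⟨hqq, hqs⟩
    have h1 : q⁻¹ = q := inv_eq_of_mul_eq_one_left hqq
    have hqk : q (q k) = k := by
      have := congrArg (fun f : Equiv.Perm ι => f k) hqq
      simpa using this
    have hlm : q k ∈ s := by
      by_contra h
      have h2 := hqs _ h
      rw [h2] at hqk
      rw [hqk] at h
      exact h hk
    refine ⟨(q k, Equiv.swap k (q k) * q), ⟨hlm, ?_, ?_, ?_, ?_⟩, ?_⟩
    · show Equiv.swap k (q k) * q * (Equiv.swap k (q k) * q) = 1
      have h2 : q * Equiv.swap k (q k) * q⁻¹ = Equiv.swap (q k) (q (q k)) :=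
        (Equiv.swap_apply_apply q k (q k)).symm
      rw [h1, hqk] at h2
      calc Equiv.swap k (q k) * q * (Equiv.swap k (q k) * q)
          = Equiv.swap k (q k) * (q * Equiv.swap k (q k) * q) := by group
        _ = Equiv.swap k (q k) * Equiv.swap (q k) k := by rw [h2]
        _ = Equiv.swap k (q k) * Equiv.swap k (q k) := by rw [Equiv.swap_comm]
        _ = 1 := Equiv.swap_mul_self _ _
    · intro i hi
      have hik : i ≠ k := fun h => hi (h ▸ hk)
      have hil : i ≠ q k := fun h => hi (h ▸ hlm)
      show Equiv.swap k (q k) (q i) = i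
      rw [hqs i hi, Equiv.swap_apply_of_ne_of_ne hik hil]
    · show Equiv.swap k (q k) (q k) = k
      exact Equiv.swap_apply_right _ _
    · show Equiv.swap k (q k) (q (q k)) = q k
      rw [hqk, Equiv.swap_apply_left]
    · show Equiv.swap k (q k) * (Equiv.swap k (q k) * q) = q
      rw [← mul_assoc, Equiv.swap_mul_self, one_mul]
end

section
/- Let R be a commutative ring, ι a finite type, and C : ι → ι → R a matrix. For a finite subset s of ι, define Δ(s) = Σ_p ε(p)·Π_{i ∈ s} C(i, p(i)), where the sum ranges over all permutations p of ι with p ∘ p = id that fix every element outside s, and ε(p) is the signature of p. Then for every k ∈ s one has the expansion Δ(s) = C(k,k)·Δ(s \ {k}) - Σ_{i ∈ s \ {k}} C(i,k)·C(k,i)·Δ(s \ {k,i}). -/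
open scoped Classical in
/-- The determinant-like sum over involutive permutations supported in `s`:
`Δ(s) = ∑_{p ∘ p = id, p = id outside s} ε(p) ∏_{i ∈ s} C i (p i)`. -/
noncomputable def Delta {R : Type*} [CommRing R] {ι : Type*} [Fintype ι]
    (C : ι → ι → R) (s : Finset ι) : R :=
  ∑ p ∈ Finset.univ.filter
      (fun p : Equiv.Perm ι => p * p = 1 ∧ ∀ i ∉ s, p i = i),
    ((Equiv.Perm.sign p : ℤ) : R) * ∏ i ∈ s, C i (p i)

private lemma swap_comm_aux {ι : Type*} [DecidableEq ι] (p : Equiv.Perm ι) (k i : ι)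
    (h : (p k = i ∧ p i = k) ∨ (p k = k ∧ p i = i)) :
    Equiv.swap k i * p = p * Equiv.swap k i := by
  ext x
  simp only [Equiv.Perm.mul_apply]
  rcases eq_or_ne x k with rfl | hxk
  · rcases h with ⟨h1, h2⟩ | ⟨h1, h2⟩ <;>
      simp [h1, h2, Equiv.swap_apply_left, Equiv.swap_apply_right]
  rcases eq_or_ne x i with rfl | hxi
  · rcases h with ⟨h1, h2⟩ | ⟨h1, h2⟩ <;>
      simp [h1, h2, Equiv.swap_apply_left, Equiv.swap_apply_right]
  · rw [Equiv.swap_apply_of_ne_of_ne hxk hxi, Equiv.swap_apply_of_ne_of_ne ?_ ?_]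
    · intro hpx
      rcases h with ⟨h1, h2⟩ | ⟨h1, h2⟩
      · exact hxi (p.injective (hpx.trans h2.symm))
      · exact hxk (p.injective (hpx.trans h1.symm))
    · intro hpx
      rcases h with ⟨h1, h2⟩ | ⟨h1, h2⟩
      · exact hxk (p.injective (hpx.trans h1.symm))
      · exact hxi (p.injective (hpx.trans h2.symm))

private lemma Delta_eq {R : Type*} [CommRing R] {ι : Type*} [Fintype ι] [DecidableEq ι]
    (C : ι → ι → R) (s : Finset ι) :
    Delta C s = ∑ p ∈ Finset.univ.filter
      (fun p : Equiv.Perm ι => p * p = 1 ∧ ∀ i ∉ s, p i = i),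
    ((Equiv.Perm.sign p : ℤ) : R) * ∏ i ∈ s, C i (p i) := by
  unfold Delta
  congr!

private lemma invol_apply {ι : Type*} (p : Equiv.Perm ι) (h : p * p = 1) (x : ι) :
    p (p x) = x := by
  rw [← Equiv.Perm.mul_apply, h, Equiv.Perm.one_apply]

theorem stmt8 {R : Type*} [CommRing R] {ι : Type*} [Fintype ι] [DecidableEq ι]
    (C : ι → ι → R) (s : Finset ι) (k : ι) (hk : k ∈ s) :
    Delta C s = C k k * Delta C (s.erase k)
      - ∑ i ∈ s.erase k, C i k * C k i * Delta C ((s.erase k).erase i) := by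
  classical
  simp only [Delta_eq]
  rw [← Finset.sum_filter_add_sum_filter_not _ (fun p : Equiv.Perm ι => p k = k),
    sub_eq_add_neg]
  congr 1
  · -- fixed-point part: equals C k k * Delta C (s.erase k)
    rw [Finset.mul_sum]
    refine Finset.sum_congr ?_ ?_
    · ext p
      simp only [Finset.mem_filter, Finset.mem_univ, true_and]
      constructor
      · rintro ⟨⟨hpp, hout⟩, hpk⟩
        refine ⟨hpp, fun j hj => ?_⟩
        rcases eq_or_ne j k with rfl | hjk
        · exact hpk
        · exact hout j (fun hjs => hj (Finset.mem_erase.2 ⟨hjk, hjs⟩))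
      · rintro ⟨hpp, hout⟩
        have hpk : p k = k := hout k (Finset.notMem_erase k s)
        exact ⟨⟨hpp, fun j hj => hout j (fun hje => hj (Finset.mem_of_mem_erase hje))⟩, hpk⟩
    · intro p hp
      simp only [Finset.mem_filter, Finset.mem_univ, true_and] at hp
      have hpk : p k = k := hp.2 k (Finset.notMem_erase k s)
      rw [← Finset.mul_prod_erase s _ hk, hpk]
      ring
  · -- moving part: fiberwise over i = p k
    rw [← Finset.sum_neg_distrib]
    refine Eq.trans
      (Finset.sum_fiberwise_of_maps_to (t := s.erase k) (g := fun p : Equiv.Perm ι => p k)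
        ?_ _).symm ?_
    · intro p hp
      simp only [Finset.mem_filter, Finset.mem_univ, true_and] at hp
      refine Finset.mem_erase.2 ⟨hp.2, ?_⟩
      by_contra hpk
      have := hp.1.2 (p k) hpk
      rw [invol_apply p hp.1.1 k] at this
      exact hp.2 this.symm
    refine Finset.sum_congr rfl fun i hi => ?_
    have hik : i ≠ k := Finset.ne_of_mem_erase hi
    have his : i ∈ s := Finset.mem_of_mem_erase hi
    rw [Finset.mul_sum, ← Finset.sum_neg_distrib]
    refine Finset.sum_nbij' (fun p => Equiv.swap k i * p) (fun q => Equiv.swap k i * q)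
      ?_ ?_ ?_ ?_ ?_
    · -- forward membership
      intro p hp
      simp only [Finset.mem_filter, Finset.mem_univ, true_and] at hp ⊢
      obtain ⟨⟨⟨hpp, hout⟩, -⟩, hpk⟩ := hp
      have hpi : p i = k := by rw [← hpk, invol_apply p hpp]
      have hcomm := swap_comm_aux p k i (Or.inl ⟨hpk, hpi⟩)
      constructor
      · calc Equiv.swap k i * p * (Equiv.swap k i * p)
            = Equiv.swap k i * (p * Equiv.swap k i) * p := by group
          _ = Equiv.swap k i * (Equiv.swap k i * p) * p := by rw [← hcomm]
          _ = (Equiv.swap k i * Equiv.swap k i) * (p * p) := by group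
          _ = 1 := by rw [Equiv.swap_mul_self, hpp, one_mul]
      · intro j hj
        rcases eq_or_ne j k with rfl | hjk
        · simp [Equiv.Perm.mul_apply, hpk, Equiv.swap_apply_right]
        rcases eq_or_ne j i with rfl | hji
        · simp [Equiv.Perm.mul_apply, hpi, Equiv.swap_apply_left]
        have hjs : j ∉ s := by
          intro hjs
          exact hj (Finset.mem_erase.2 ⟨hji, Finset.mem_erase.2 ⟨hjk, hjs⟩⟩)
        simp [Equiv.Perm.mul_apply, hout j hjs, Equiv.swap_apply_of_ne_of_ne hjk hji]
    · -- backward membership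
      intro q hq
      simp only [Finset.mem_filter, Finset.mem_univ, true_and] at hq ⊢
      obtain ⟨hqq, hout⟩ := hq
      have hqk : q k = k := hout k (by
        intro h
        exact Finset.notMem_erase k s (Finset.mem_of_mem_erase h))
      have hqi : q i = i := hout i (Finset.notMem_erase i _)
      have hcomm := swap_comm_aux q k i (Or.inr ⟨hqk, hqi⟩)
      have hpk : (Equiv.swap k i * q) k = i := by
        simp [Equiv.Perm.mul_apply, hqk, Equiv.swap_apply_left]
      refine ⟨⟨⟨?_, ?_⟩, by rw [hpk]; exact hik⟩, hpk⟩
      · calc Equiv.swap k i * q * (Equiv.swap k i * q)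
            = Equiv.swap k i * (q * Equiv.swap k i) * q := by group
          _ = Equiv.swap k i * (Equiv.swap k i * q) * q := by rw [← hcomm]
          _ = (Equiv.swap k i * Equiv.swap k i) * (q * q) := by group
          _ = 1 := by rw [Equiv.swap_mul_self, hqq, one_mul]
      · intro j hj
        have hjk : j ≠ k := fun h => hj (h ▸ hk)
        have hji : j ≠ i := fun h => hj (h ▸ his)
        have : q j = j := hout j (fun h =>
          hj (Finset.mem_of_mem_erase (Finset.mem_of_mem_erase h)))
        simp [Equiv.Perm.mul_apply, this, Equiv.swap_apply_of_ne_of_ne hjk hji]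
    · intro p _
      simp only [← mul_assoc, Equiv.swap_mul_self, one_mul]
    · intro q _
      simp only [← mul_assoc, Equiv.swap_mul_self, one_mul]
    · -- term equality
      intro p hp
      beta_reduce
      simp only [Finset.mem_filter, Finset.mem_univ, true_and] at hp
      obtain ⟨⟨⟨hpp, hout⟩, -⟩, hpk⟩ := hp
      have hpi : p i = k := by rw [← hpk, invol_apply p hpp]
      have hsign : Equiv.Perm.sign (Equiv.swap k i * p) = - Equiv.Perm.sign p := by
        rw [map_mul, Equiv.Perm.sign_swap (Ne.symm hik), neg_one_mul]
      have hprod : ∏ j ∈ s, C j (p j)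
          = C k i * (C i k * ∏ j ∈ (s.erase k).erase i, C j (p j)) := by
        rw [← Finset.mul_prod_erase s _ hk, hpk,
          ← Finset.mul_prod_erase (s.erase k) _ hi, hpi]
      have hprod2 : ∏ j ∈ (s.erase k).erase i, C j ((Equiv.swap k i * p) j)
          = ∏ j ∈ (s.erase k).erase i, C j (p j) := by
        refine Finset.prod_congr rfl fun j hj => ?_
        have hjk : p j ≠ k := fun h => (Finset.mem_erase.1 hj).1 (p.injective (h.trans hpi.symm))
        have hji : p j ≠ i := fun h =>
          (Finset.mem_erase.1 (Finset.mem_of_mem_erase hj)).1 (p.injective (h.trans hpk.symm))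
        simp [Equiv.Perm.mul_apply, Equiv.swap_apply_of_ne_of_ne hjk hji]
      rw [hprod, hsign, hprod2]
      push_cast
      ring
end

section
/- Let s > 0, σ > 0, S₀ > 0, x > 0, let G be a standard Gaussian random variable, and set S_s = S₀·exp(σ√s·G - σ²s/2), β = (ln(x/S₀) + σ²s/2)/σ, and d₁ = (β + σs)/√s. Then E[1_{S_s ≥ x}·(√s·G + σs)/S_s] = (e^{σ²s}/S₀)·√(s/(2π))·exp(-d₁²/2). Consequently, for 0 < s < t and W_{s,t} = (t-s)·(√s·G + σs) - s·√(t-s)·G' with G' a standard Gaussian independent of G, one has E[1_{S_s ≥ x}·W_{s,t}/S_s] = (t-s)·(e^{σ²s}/S₀)·√(s/(2π))·exp(-d₁²/2). -/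
/-!
Writing `c = σ√s`, the spot is `S_s = S₀ exp(cG - c²/2)` and `{S_s ≥ x} = {G ≥ a}` with
`a + c = d₁`. Dividing the standard Gaussian density by the exponential martingale
`exp(cy - c²/2)` shifts it by `c` (Cameron–Martin), so the first expectation becomes
`(√s e^{c²}/S₀) ∫_{a+c}^∞ z φ(z) dz = (√s e^{c²}/S₀) φ(d₁)`. In `W_{s,t}`, the `G'` term
contributes nothing: `1_{S_s ≥ x}/S_s ≤ 1/x` is a bounded function of `G`, independent of the
centred `G'`.
-/

open MeasureTheory ProbabilityTheory Real Set Filter Topology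

namespace ProbabilityTheory

lemma gaussianPDFReal_zero_one (x : ℝ) :
    gaussianPDFReal 0 1 x = (√(2 * π))⁻¹ * exp (-x ^ 2 / 2) := by
  simp [gaussianPDFReal]

lemma hasDerivAt_gaussianPDFReal_zero_one (x : ℝ) :
    HasDerivAt (gaussianPDFReal 0 1) (-(x * gaussianPDFReal 0 1 x)) x := by
  simp_rw [funext gaussianPDFReal_zero_one]
  have := ((((hasDerivAt_id' x).fun_pow 2).fun_neg.div_const 2).exp).const_mul (√(2 * π))⁻¹
  refine this.congr_deriv ?_
  push_cast
  ring

lemma tendsto_gaussianPDFReal_zero_one_atTop : Tendsto (gaussianPDFReal 0 1) atTop (𝓝 0) := by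
  simp_rw [funext gaussianPDFReal_zero_one]
  rw [← mul_zero (√(2 * π))⁻¹]
  refine (tendsto_exp_atBot.comp ?_).const_mul _
  exact (tendsto_neg_atTop_atBot.comp (tendsto_pow_atTop two_ne_zero)).atBot_div_const two_pos

lemma integrable_mul_gaussianPDFReal_zero_one :
    Integrable fun x => x * gaussianPDFReal 0 1 x := by
  simp_rw [gaussianPDFReal_zero_one]
  convert (integrable_mul_exp_neg_mul_sq (b := 1 / 2) (by norm_num)).const_mul (√(2 * π))⁻¹
    using 2
  ring_nf

lemma setIntegral_Ioi_mul_gaussianPDFReal_zero_one (a : ℝ) :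
    ∫ x in Ioi a, x * gaussianPDFReal 0 1 x = gaussianPDFReal 0 1 a := by
  have hderiv (x : ℝ) :
      HasDerivAt (fun x => -gaussianPDFReal 0 1 x) (x * gaussianPDFReal 0 1 x) x := by
    simpa using (hasDerivAt_gaussianPDFReal_zero_one x).fun_neg
  rw [integral_Ioi_of_hasDerivAt_of_tendsto (f := fun x => -gaussianPDFReal 0 1 x)
    (hderiv a).continuousAt.continuousWithinAt (fun x _ => hderiv x)
    integrable_mul_gaussianPDFReal_zero_one.integrableOn
    (by simpa using tendsto_gaussianPDFReal_zero_one_atTop.neg)]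
  ring

/-- Cameron–Martin shift. -/
lemma gaussianPDFReal_div_exp (c y : ℝ) :
    gaussianPDFReal 0 1 y / exp (c * y - c ^ 2 / 2)
      = exp (c ^ 2) * gaussianPDFReal 0 1 (y + c) := by
  rw [gaussianPDFReal_zero_one, gaussianPDFReal_zero_one, mul_div_assoc, ← exp_sub,
    mul_left_comm, ← exp_add]
  ring_nf

lemma gaussianPDFReal_mul_indicator_div_exp (a c : ℝ) (g : ℝ → ℝ) (y : ℝ) :
    gaussianPDFReal 0 1 y * (Ici a).indicator (fun y => g y / exp (c * y - c ^ 2 / 2)) y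
      = exp (c ^ 2) * (Ici a).indicator (fun y => g y * gaussianPDFReal 0 1 (y + c)) y := by
  by_cases hy : y ∈ Ici a
  · simp only [indicator_of_mem hy]
    rw [mul_div_left_comm, gaussianPDFReal_div_exp]
    ring
  · simp [indicator_of_notMem hy]

lemma integral_indicator_mul_div_exp_gaussianReal (a c : ℝ) :
    ∫ y, (Ici a).indicator (fun y => (y + c) / exp (c * y - c ^ 2 / 2)) y ∂gaussianReal 0 1
      = exp (c ^ 2) * gaussianPDFReal 0 1 (a + c) := by
  simp_rw [integral_gaussianReal_eq_integral_smul one_ne_zero, smul_eq_mul,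
    gaussianPDFReal_mul_indicator_div_exp, integral_const_mul]
  have hshift : (Ici a).indicator (fun y => (y + c) * gaussianPDFReal 0 1 (y + c))
      = fun y => (Ici (a + c)).indicator (fun z => z * gaussianPDFReal 0 1 z) (y + c) := by
    ext y
    simp [indicator_apply]
  rw [hshift, integral_add_right_eq_self (fun z => (Ici (a + c)).indicator _ z) c,
    integral_indicator measurableSet_Ici, integral_Ici_eq_integral_Ioi,
    setIntegral_Ioi_mul_gaussianPDFReal_zero_one]

lemma HasLaw.integrable_of_gaussianReal {Ω : Type*} [MeasurableSpace Ω] {P : Measure Ω}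
    {X : Ω → ℝ} {μ : ℝ} {v : NNReal} (hX : HasLaw X (gaussianReal μ v) P) : Integrable X P := by
  have hid := (memLp_id_gaussianReal (μ := μ) (v := v) 1).integrable le_rfl
  rw [← hX.map_eq] at hid
  exact (integrable_map_measure aestronglyMeasurable_id hX.aemeasurable).mp hid

end ProbabilityTheory

lemma Real.le_mul_exp_iff {x S c k y : ℝ} (hx : 0 < x) (hS : 0 < S) (hc : 0 < c) :
    x ≤ S * exp (c * y - k) ↔ (log (x / S) + k) / c ≤ y := by
  rw [← div_le_iff₀' hS, ← log_le_iff_le_exp (div_pos hx hS), div_le_iff₀ hc]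
  constructor <;> intro h <;> linarith

/-- With `c = σ√s` and `y = G` this is the weight `1_{S_s ≥ x} / S_s`. -/
noncomputable def digitalWeight (x S₀ c y : ℝ) : ℝ :=
  (if x ≤ S₀ * exp (c * y - c ^ 2 / 2) then 1 else 0) / (S₀ * exp (c * y - c ^ 2 / 2))

section digitalWeight

variable {x S₀ c : ℝ}

lemma measurable_digitalWeight : Measurable (digitalWeight x S₀ c) :=
  (Measurable.ite (measurableSet_le measurable_const (by fun_prop)) measurable_const
    measurable_const).div (by fun_prop)

lemma abs_digitalWeight_le (hx : 0 < x) (y : ℝ) : |digitalWeight x S₀ c y| ≤ x⁻¹ := by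
  unfold digitalWeight
  split_ifs with h
  · rw [abs_of_pos (one_div_pos.2 (hx.trans_le h)), one_div]
    exact inv_anti₀ hx h
  · simp [hx.le]

lemma digitalWeight_mul_eq_indicator (hx : 0 < x) (hS₀ : 0 < S₀) (hc : 0 < c) (g : ℝ → ℝ)
    (y : ℝ) :
    digitalWeight x S₀ c y * g y
      = (Ici ((log (x / S₀) + c ^ 2 / 2) / c)).indicator
          (fun y => g y / exp (c * y - c ^ 2 / 2)) y / S₀ := by
  simp only [digitalWeight, le_mul_exp_iff hx hS₀ hc, indicator_apply, mem_Ici]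
  split_ifs <;> ring

lemma integral_digitalWeight_mul_add_gaussianReal (hx : 0 < x) (hS₀ : 0 < S₀) (hc : 0 < c) :
    ∫ y, digitalWeight x S₀ c y * (y + c) ∂gaussianReal 0 1
      = exp (c ^ 2) / S₀ * gaussianPDFReal 0 1 ((log (x / S₀) + c ^ 2 / 2) / c + c) := by
  simp_rw [digitalWeight_mul_eq_indicator hx hS₀ hc (· + c)]
  rw [integral_div, integral_indicator_mul_div_exp_gaussianReal]
  ring

variable {Ω : Type*} [MeasurableSpace Ω] {P : Measure Ω} {G G' : Ω → ℝ}

lemma integral_digitalWeight_comp_mul_add (hG : HasLaw G (gaussianReal 0 1) P) (hx : 0 < x)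
    (hS₀ : 0 < S₀) (hc : 0 < c) :
    ∫ ω, digitalWeight x S₀ c (G ω) * (G ω + c) ∂P
      = exp (c ^ 2) / S₀ * gaussianPDFReal 0 1 ((log (x / S₀) + c ^ 2 / 2) / c + c) := by
  rw [← integral_digitalWeight_mul_add_gaussianReal hx hS₀ hc]
  exact hG.integral_comp (f := fun y => digitalWeight x S₀ c y * (y + c))
    (measurable_digitalWeight.mul (by fun_prop)).aestronglyMeasurable

lemma integral_digitalWeight_comp_mul_eq_zero {v : NNReal} (hG : AEMeasurable G P)
    (hG' : HasLaw G' (gaussianReal 0 v) P) (hind : IndepFun G G' P) :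
    ∫ ω, digitalWeight x S₀ c (G ω) * G' ω ∂P = 0 := by
  have hind' : IndepFun (fun ω => digitalWeight x S₀ c (G ω)) G' P :=
    hind.comp measurable_digitalWeight measurable_id
  rw [hind'.integral_fun_mul_eq_mul_integral
    (measurable_digitalWeight.comp_aemeasurable hG).aestronglyMeasurable
    hG'.aemeasurable.aestronglyMeasurable, hG'.integral_eq, integral_id_gaussianReal, mul_zero]

lemma integrable_digitalWeight_comp_mul {Y : Ω → ℝ} (hx : 0 < x) (hG : AEMeasurable G P)
    (hY : Integrable Y P) :
    Integrable (fun ω => digitalWeight x S₀ c (G ω) * Y ω) P :=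
  hY.bdd_mul (measurable_digitalWeight.comp_aemeasurable hG).aestronglyMeasurable
    (ae_of_all _ fun ω => abs_digitalWeight_le hx (G ω))

end digitalWeight

theorem stmt12_general {Ω : Type*} [MeasurableSpace Ω] (P : Measure Ω)
    (s t σ S₀ x : ℝ) (hs : 0 < s) (hσ : 0 < σ) (hS₀ : 0 < S₀) (hx : 0 < x)
    (G G' : Ω → ℝ) (hmG : Measurable G) (hmG' : Measurable G')
    (hG : P.map G = gaussianReal 0 1) (hG' : P.map G' = gaussianReal 0 1)
    (hindep : IndepFun G G' P)
    (Ss : Ω → ℝ)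
    (hSs : ∀ ω, Ss ω = S₀ * Real.exp (σ * Real.sqrt s * G ω - σ ^ 2 * s / 2))
    (β d₁ : ℝ)
    (hβ : β = (Real.log (x / S₀) + σ ^ 2 * s / 2) / σ)
    (hd₁ : d₁ = (β + σ * s) / Real.sqrt s)
    (Wst : Ω → ℝ)
    (hWst : ∀ ω, Wst ω = (t - s) * (Real.sqrt s * G ω + σ * s)
      - s * (Real.sqrt (t - s) * G' ω)) :
    (∫ ω, (if x ≤ Ss ω then (1 : ℝ) else 0) * (Real.sqrt s * G ω + σ * s) / Ss ω ∂P
      = (Real.exp (σ ^ 2 * s) / S₀) * Real.sqrt (s / (2 * Real.pi))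
          * Real.exp (-d₁ ^ 2 / 2)) ∧
    (∫ ω, (if x ≤ Ss ω then (1 : ℝ) else 0) * Wst ω / Ss ω ∂P
      = (t - s) * (Real.exp (σ ^ 2 * s) / S₀) * Real.sqrt (s / (2 * Real.pi))
          * Real.exp (-d₁ ^ 2 / 2)) := by
  set c := σ * √s with hc_def
  have hc : 0 < c := by positivity
  have hc2 : c ^ 2 = σ ^ 2 * s := by rw [hc_def, mul_pow, sq_sqrt hs.le]
  have hσs : σ * s = c * √s := by rw [hc_def, mul_assoc, mul_self_sqrt hs.le]
  have hd₁c : d₁ = (log (x / S₀) + c ^ 2 / 2) / c + c := by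
    rw [hd₁, hβ, ← hc2, add_div, div_div, ← hc_def, hσs,
      mul_div_cancel_right₀ _ (sqrt_pos.2 hs).ne']
  have hweight (ω : Ω) :
      (if x ≤ Ss ω then (1 : ℝ) else 0) / Ss ω = digitalWeight x S₀ c (G ω) := by
    rw [hSs, ← hc2, digitalWeight]
  have hlaw : HasLaw G (gaussianReal 0 1) P := ⟨hmG.aemeasurable, hG⟩
  have hlaw' : HasLaw G' (gaussianReal 0 1) P := ⟨hmG'.aemeasurable, hG'⟩
  have hmain := integral_digitalWeight_comp_mul_add hlaw hx hS₀ hc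
  rw [← hd₁c] at hmain
  have hrhs : exp (c ^ 2) / S₀ * gaussianPDFReal 0 1 d₁ * √s
      = exp (σ ^ 2 * s) / S₀ * √(s / (2 * π)) * exp (-d₁ ^ 2 / 2) := by
    rw [gaussianPDFReal_zero_one, hc2, sqrt_div hs.le]
    ring
  constructor
  · have hfactor (ω : Ω) : (if x ≤ Ss ω then (1 : ℝ) else 0) * (√s * G ω + σ * s) / Ss ω
        = √s * (digitalWeight x S₀ c (G ω) * (G ω + c)) := by
      rw [mul_div_right_comm, hweight, hσs]
      ring
    simp_rw [hfactor]
    rw [integral_const_mul, hmain]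
    linear_combination hrhs
  · have hexpand (ω : Ω) : (if x ≤ Ss ω then (1 : ℝ) else 0) * Wst ω / Ss ω
        = (t - s) * √s * (digitalWeight x S₀ c (G ω) * (G ω + c))
          - s * √(t - s) * (digitalWeight x S₀ c (G ω) * G' ω) := by
      rw [mul_div_right_comm, hweight, hWst, hσs]
      ring
    simp_rw [hexpand]
    rw [integral_sub ((integrable_digitalWeight_comp_mul hx hmG.aemeasurable
        (gaussianReal_add_const hlaw c).integrable_of_gaussianReal).const_mul _)
        ((integrable_digitalWeight_comp_mul hx hmG.aemeasurable
          hlaw'.integrable_of_gaussianReal).const_mul _),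
      integral_const_mul, integral_const_mul, hmain,
      integral_digitalWeight_comp_mul_eq_zero hmG.aemeasurable hlaw' hindep]
    linear_combination (t - s) * hrhs

theorem stmt12 {Ω : Type*} [MeasurableSpace Ω] (P : Measure Ω) [IsProbabilityMeasure P]
    (s t σ S₀ x : ℝ) (hs : 0 < s) (hst : s < t) (hσ : 0 < σ) (hS₀ : 0 < S₀) (hx : 0 < x)
    (G G' : Ω → ℝ) (hmG : Measurable G) (hmG' : Measurable G')
    (hG : P.map G = gaussianReal 0 1) (hG' : P.map G' = gaussianReal 0 1)
    (hindep : IndepFun G G' P)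
    (Ss : Ω → ℝ)
    (hSs : ∀ ω, Ss ω = S₀ * Real.exp (σ * Real.sqrt s * G ω - σ ^ 2 * s / 2))
    (β d₁ : ℝ)
    (hβ : β = (Real.log (x / S₀) + σ ^ 2 * s / 2) / σ)
    (hd₁ : d₁ = (β + σ * s) / Real.sqrt s)
    (Wst : Ω → ℝ)
    (hWst : ∀ ω, Wst ω = (t - s) * (Real.sqrt s * G ω + σ * s)
      - s * (Real.sqrt (t - s) * G' ω)) :
    (∫ ω, (if x ≤ Ss ω then (1 : ℝ) else 0) * (Real.sqrt s * G ω + σ * s) / Ss ω ∂P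
      = (Real.exp (σ ^ 2 * s) / S₀) * Real.sqrt (s / (2 * Real.pi))
          * Real.exp (-d₁ ^ 2 / 2)) ∧
    (∫ ω, (if x ≤ Ss ω then (1 : ℝ) else 0) * Wst ω / Ss ω ∂P
      = (t - s) * (Real.exp (σ ^ 2 * s) / S₀) * Real.sqrt (s / (2 * Real.pi))
          * Real.exp (-d₁ ^ 2 / 2)) :=
  stmt12_general P s t σ S₀ x hs hσ hS₀ hx G G' hmG hmG' hG hG' hindep Ss hSs β d₁ hβ hd₁ Wst hWst
end

section
/- Let 0 < s < t, σ > 0, S₀ > 0, x > 0 and w ∈ ℝ. Let G be a standard Gaussian random variable and define S = S₀·exp(-σ²s/2 + σ·(sw/t) + σ√(s(t-s)/t)·G) and V = (t-s)·σs + √(t·s·(t-s))·G. Set β = (ln(x/S₀) + σ²s/2)/σ, m = σ√(s(t-s)/t), and d₂(w) = √(t/(s(t-s)))·(β - sw/t). Then E[1_{S ≥ x}·V/S] = (1/S₀)·√(t·s·(t-s)/(2π))·exp(σ²s - σ²s²/(2t) - σsw/t - (d₂(w) + m)²/2). -/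
/-!
Both `S` and `V` are functions of the single standard Gaussian `G`: `S = S₀ e^{A + mG}` with
`A = -σ²s/2 + σsw/t`, `V = √(ts(t-s)) (G + m)`, and `S ≥ x` exactly when `G ≥ d₂(w)`.
Completing the square, `φ(g) e^{-mg} = e^{m²/2} φ(g + m)` for the standard normal density `φ`,
so the expectation reduces to `∫_{d₂}^∞ (g + m) e^{-(g+m)²/2} dg = e^{-(d₂+m)²/2}`, the integrand
being the derivative of `-e^{-(g+m)²/2}`.
-/

open MeasureTheory ProbabilityTheory Real Set Filter Topology

theorem sqrt_mul_eq_mul_sqrt_div {t : ℝ} (ht : 0 < t) (a : ℝ) : √(t * a) = t * √(a / t) := by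
  rw [show t * a = t ^ 2 * (a / t) by field_simp, sqrt_mul (sq_nonneg t), sqrt_sq ht.le]

theorem integral_Ioi_add_mul_exp_neg_sq_div_two (d m : ℝ) :
    ∫ x in Ioi d, (x + m) * exp (-(x + m) ^ 2 / 2) = exp (-(d + m) ^ 2 / 2) := by
  have hint : Integrable fun x : ℝ ↦ (x + m) * exp (-(x + m) ^ 2 / 2) := by
    convert (integrable_mul_exp_neg_mul_sq (by norm_num : (0 : ℝ) < 1 / 2)).comp_add_right m
      using 2 with x
    ring_nf
  have hderiv : ∀ x ∈ Ici d, HasDerivAt (fun u ↦ -exp (-(u + m) ^ 2 / 2))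
      ((x + m) * exp (-(x + m) ^ 2 / 2)) x := by
    intro x _
    have hinner : HasDerivAt (fun u ↦ -(u + m) ^ 2 / 2) (-(x + m)) x :=
      ((((hasDerivAt_id x).add_const m).pow 2).neg.div_const 2).congr_deriv
        (by simp only [id]; ring)
    exact hinner.exp.neg.congr_deriv (by ring)
  have hlim : Tendsto (fun u ↦ -exp (-(u + m) ^ 2 / 2)) atTop (𝓝 0) := by
    have hsq : Tendsto (fun u : ℝ ↦ (u + m) ^ 2 / 2) atTop atTop :=
      ((tendsto_pow_atTop two_ne_zero).comp (tendsto_atTop_add_const_right _ m tendsto_id))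
        |>.atTop_div_const two_pos
    simpa [neg_div] using (tendsto_exp_neg_atTop_nhds_zero.comp hsq).neg
  rw [integral_Ioi_of_hasDerivAt_of_tendsto' hderiv hint.integrableOn hlim]
  ring

theorem integral_indicator_Ici_mul_exp_gaussianReal (d m : ℝ) :
    ∫ g, (Ici d).indicator (fun g ↦ (g + m) * exp (-(m * g))) g ∂gaussianReal 0 1
      = exp (m ^ 2 / 2 - (d + m) ^ 2 / 2) / √(2 * π) := by
  have hdensity : ∀ g,
      gaussianPDFReal 0 1 g • (Ici d).indicator (fun g ↦ (g + m) * exp (-(m * g))) g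
        = exp (m ^ 2 / 2) / √(2 * π) *
          (Ici d).indicator (fun g ↦ (g + m) * exp (-(g + m) ^ 2 / 2)) g := by
    intro g
    by_cases hg : g ∈ Ici d
    · have hsq : exp (-(g - 0) ^ 2 / 2) * exp (-(m * g))
          = exp (m ^ 2 / 2) * exp (-(g + m) ^ 2 / 2) := by
        rw [← exp_add, ← exp_add]; ring_nf
      simp only [indicator_of_mem hg, gaussianPDFReal, smul_eq_mul, NNReal.coe_one, mul_one]
      linear_combination (g + m) / √(2 * π) * hsq
    · simp [indicator_of_notMem hg]
  rw [integral_gaussianReal_eq_integral_smul one_ne_zero]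
  simp_rw [hdensity]
  rw [integral_const_mul, integral_indicator measurableSet_Ici, integral_Ici_eq_integral_Ioi,
    integral_Ioi_add_mul_exp_neg_sq_div_two, sub_eq_add_neg, ← neg_div, exp_add]
  ring

theorem integral_indicator_le_mul_div_of_map_eq_gaussianReal {Ω : Type*} [MeasurableSpace Ω]
    {P : Measure Ω} {G : Ω → ℝ} (hmG : Measurable G) (hG : P.map G = gaussianReal 0 1)
    {x c m : ℝ} (hx : 0 < x) (hc : 0 < c) (hm : 0 < m) (A k : ℝ) :
    ∫ ω, (if x ≤ c * exp (A + m * G ω) then (1 : ℝ) else 0) * (k * (G ω + m))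
        / (c * exp (A + m * G ω)) ∂P
      = k / (c * √(2 * π)) * exp (-A + m ^ 2 / 2 - ((log (x / c) - A) / m + m) ^ 2 / 2) := by
  set d := (log (x / c) - A) / m
  have hthreshold : ∀ g, x ≤ c * exp (A + m * g) ↔ g ∈ Ici d := fun g ↦ by
    rw [mem_Ici, div_le_iff₀ hm, sub_le_iff_le_add', mul_comm g m,
      log_le_iff_le_exp (div_pos hx hc), div_le_iff₀' hc]
  have hintegrand : ∀ g, (if x ≤ c * exp (A + m * g) then (1 : ℝ) else 0) * (k * (g + m))
      / (c * exp (A + m * g))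
        = k / (c * exp A) * (Ici d).indicator (fun g ↦ (g + m) * exp (-(m * g))) g := by
    intro g
    by_cases hg : g ∈ Ici d
    · rw [if_pos ((hthreshold g).2 hg), indicator_of_mem hg, exp_add, exp_neg]
      field_simp
    · rw [if_neg (mt (hthreshold g).1 hg), indicator_of_notMem hg]
      simp
  have hmeas : Measurable ((Ici d).indicator fun g ↦ (g + m) * exp (-(m * g))) :=
    (by fun_prop : Measurable fun g ↦ (g + m) * exp (-(m * g))).indicator measurableSet_Ici
  simp_rw [hintegrand]
  rw [integral_const_mul, ← integral_map hmG.aemeasurable hmeas.aestronglyMeasurable, hG,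
    integral_indicator_Ici_mul_exp_gaussianReal,
    show -A + m ^ 2 / 2 - (d + m) ^ 2 / 2 = -A + (m ^ 2 / 2 - (d + m) ^ 2 / 2) by ring, exp_add,
    exp_neg]
  field_simp

theorem stmt13_general {Ω : Type*} [MeasurableSpace Ω] (P : Measure Ω)
    (s t σ S₀ x w : ℝ) (hs : 0 < s) (hst : s < t) (hσ : 0 < σ) (hS₀ : 0 < S₀) (hx : 0 < x)
    (G : Ω → ℝ) (hmG : Measurable G) (hG : P.map G = gaussianReal 0 1)
    (S V : Ω → ℝ)
    (hS : ∀ ω, S ω = S₀ * Real.exp (-σ ^ 2 * s / 2 + σ * (s * w / t)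
      + σ * Real.sqrt (s * (t - s) / t) * G ω))
    (hV : ∀ ω, V ω = (t - s) * σ * s + Real.sqrt (t * s * (t - s)) * G ω)
    (β m : ℝ) (d₂ : ℝ → ℝ)
    (hβ : β = (Real.log (x / S₀) + σ ^ 2 * s / 2) / σ)
    (hm : m = σ * Real.sqrt (s * (t - s) / t))
    (hd₂ : ∀ v, d₂ v = Real.sqrt (t / (s * (t - s))) * (β - s * v / t)) :
    ∫ ω, (if x ≤ S ω then (1 : ℝ) else 0) * V ω / S ω ∂P
      = (1 / S₀) * Real.sqrt (t * s * (t - s) / (2 * Real.pi))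
          * Real.exp (σ ^ 2 * s - σ ^ 2 * s ^ 2 / (2 * t) - σ * s * w / t
            - (d₂ w + m) ^ 2 / 2) := by
  have ht : 0 < t := hs.trans hst
  set u := s * (t - s) / t with hu_def
  have hu : 0 < u := div_pos (mul_pos hs (sub_pos.2 hst)) ht
  have htu : t * u = s * (t - s) := mul_div_cancel₀ _ ht.ne'
  have hsqrt_prod : √(t * s * (t - s)) = t * √u := by rw [mul_assoc, sqrt_mul_eq_mul_sqrt_div ht]
  clear_value u
  have hsqrt_u : √u ^ 2 = u := sq_sqrt hu.le
  have hsqrt_inv : √(t / (s * (t - s))) = (√u)⁻¹ := by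
    rw [← sqrt_inv, ← htu]
    field_simp
  set A := -σ ^ 2 * s / 2 + σ * (s * w / t) with hA
  have hmpos : 0 < m := hm ▸ by positivity
  have hS' : ∀ ω, S ω = S₀ * exp (A + m * G ω) := fun ω ↦ by rw [hS, hm]
  have hV' : ∀ ω, V ω = √(t * s * (t - s)) * (G ω + m) := fun ω ↦ by
    rw [hV, hm, hsqrt_prod]
    linear_combination (-(t * σ)) * hsqrt_u - σ * htu
  have hd : d₂ w = (log (x / S₀) - A) / m := by
    rw [hd₂, hsqrt_inv, hβ, hm, hA]
    field_simp
    ring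
  simp_rw [hS', hV']
  rw [integral_indicator_le_mul_div_of_map_eq_gaussianReal hmG hG hx hS₀ hmpos, hd,
    sqrt_div (by positivity)]
  have hexponent : -A + m ^ 2 / 2 = σ ^ 2 * s - σ ^ 2 * s ^ 2 / (2 * t) - σ * s * w / t := by
    rw [hA, hm, mul_pow, hsqrt_u, hu_def]
    field_simp
    ring
  rw [hexponent]
  ring

theorem stmt13 {Ω : Type*} [MeasurableSpace Ω] (P : Measure Ω) [IsProbabilityMeasure P]
    (s t σ S₀ x w : ℝ) (hs : 0 < s) (hst : s < t) (hσ : 0 < σ) (hS₀ : 0 < S₀) (hx : 0 < x)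
    (G : Ω → ℝ) (hmG : Measurable G) (hG : P.map G = gaussianReal 0 1)
    (S V : Ω → ℝ)
    (hS : ∀ ω, S ω = S₀ * Real.exp (-σ ^ 2 * s / 2 + σ * (s * w / t)
      + σ * Real.sqrt (s * (t - s) / t) * G ω))
    (hV : ∀ ω, V ω = (t - s) * σ * s + Real.sqrt (t * s * (t - s)) * G ω)
    (β m : ℝ) (d₂ : ℝ → ℝ)
    (hβ : β = (Real.log (x / S₀) + σ ^ 2 * s / 2) / σ)
    (hm : m = σ * Real.sqrt (s * (t - s) / t))
    (hd₂ : ∀ v, d₂ v = Real.sqrt (t / (s * (t - s))) * (β - s * v / t)) :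
    ∫ ω, (if x ≤ S ω then (1 : ℝ) else 0) * V ω / S ω ∂P
      = (1 / S₀) * Real.sqrt (t * s * (t - s) / (2 * Real.pi))
          * Real.exp (σ ^ 2 * s - σ ^ 2 * s ^ 2 / (2 * t) - σ * s * w / t
            - (d₂ w + m) ^ 2 / 2) :=
  stmt13_general P s t σ S₀ x w hs hst hσ hS₀ hx G hmG hG S V hS hV β m d₂ hβ hm hd₂
end
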